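/- arXiv:2208.12377 — 2 statements merged into one kernel-verified Lean document; each statement's English description precedes it below -/
import Mathlib

section
/- Let p(w) = Σ_{k=0}^n a_k w^{n-k} be a complex polynomial with a_0 ≠ 0. Then every root α of p satisfies |α| ≤ 2 · max{ |a_k/a_0|^{1/k} : k = 1, …, n }. -/
/-!
If `‖α‖ > 2r` while every `‖a k‖ ≤ ‖a 0‖ rᵏ`, then after isolating the leading term of the root
equation, the triangle inequality gives
`‖a 0‖ ‖α‖ⁿ ≤ ∑ₖ ‖a 0‖ rᵏ ‖α‖ⁿ⁻ᵏ ≤ ‖a 0‖ ‖α‖ⁿ ∑_{k=1}^n 2⁻ᵏ < ‖a 0‖ ‖α‖ⁿ`.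
Fujiwara's bound is the case where `r` is the largest of the `‖a k / a 0‖ ^ (1 / k)`.
-/

open Finset

theorem sum_Icc_one_half_pow_lt_one (n : ℕ) : ∑ k ∈ Icc 1 n, (1 / 2 : ℝ) ^ k < 1 := by
  rw [← Ico_add_one_right_eq_Icc, geom_sum_Ico' (by norm_num) (by omega)]
  calc _ = 1 - (1 / 2 : ℝ) ^ n := by ring
    _ < 1 := sub_lt_self 1 (by positivity)

section NormedDivisionRing

variable {K : Type*} [NormedDivisionRing K] {n : ℕ} {a : ℕ → K} {z : K}

theorem norm_mul_pow_le_sum_of_sum_eq_zero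
    (hroot : ∑ k ∈ range (n + 1), a k * z ^ (n - k) = 0) :
    ‖a 0‖ * ‖z‖ ^ n ≤ ∑ k ∈ Icc 1 n, ‖a k‖ * ‖z‖ ^ (n - k) := by
  have hlead : a 0 * z ^ n = -∑ k ∈ Icc 1 n, a k * z ^ (n - k) := by
    rw [range_eq_Ico, sum_eq_sum_Ico_succ_bot (by omega), zero_add,
      Ico_add_one_right_eq_Icc, Nat.sub_zero] at hroot
    exact eq_neg_of_add_eq_zero_left hroot
  calc ‖a 0‖ * ‖z‖ ^ n = ‖∑ k ∈ Icc 1 n, a k * z ^ (n - k)‖ := by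
        rw [← norm_pow, ← norm_mul, hlead, norm_neg]
    _ ≤ ∑ k ∈ Icc 1 n, ‖a k * z ^ (n - k)‖ := norm_sum_le _ _
    _ = ∑ k ∈ Icc 1 n, ‖a k‖ * ‖z‖ ^ (n - k) := by simp only [norm_mul, norm_pow]

theorem norm_le_two_mul_of_sum_eq_zero
    (hroot : ∑ k ∈ range (n + 1), a k * z ^ (n - k) = 0) (ha : a 0 ≠ 0) {r : ℝ} (hr : 0 ≤ r)
    (hcoeff : ∀ k ∈ Icc 1 n, ‖a k‖ ≤ ‖a 0‖ * r ^ k) :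
    ‖z‖ ≤ 2 * r := by
  by_contra! hz
  set x := ‖z‖
  have hx : 0 ≤ x := norm_nonneg z
  have hterm : ∀ k ∈ Icc 1 n, ‖a k‖ * x ^ (n - k) ≤ ‖a 0‖ * x ^ n * (1 / 2) ^ k := by
    intro k hk
    have hkn : k ≤ n := (mem_Icc.mp hk).2
    calc ‖a k‖ * x ^ (n - k) ≤ ‖a 0‖ * r ^ k * x ^ (n - k) := by gcongr; exact hcoeff k hk
      _ ≤ ‖a 0‖ * (x / 2) ^ k * x ^ (n - k) := by gcongr; linarith
      _ = ‖a 0‖ * (x ^ k * x ^ (n - k)) * (1 / 2) ^ k := by ring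
      _ = ‖a 0‖ * x ^ n * (1 / 2) ^ k := by rw [pow_mul_pow_sub x hkn]
  have hpos : 0 < ‖a 0‖ * x ^ n := by
    have : 0 < x := by linarith
    positivity
  have := calc ‖a 0‖ * x ^ n ≤ ∑ k ∈ Icc 1 n, ‖a k‖ * x ^ (n - k) :=
        norm_mul_pow_le_sum_of_sum_eq_zero hroot
    _ ≤ ∑ k ∈ Icc 1 n, ‖a 0‖ * x ^ n * (1 / 2) ^ k := sum_le_sum hterm
    _ = ‖a 0‖ * x ^ n * ∑ k ∈ Icc 1 n, (1 / 2 : ℝ) ^ k := (mul_sum _ _ _).symm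
    _ < ‖a 0‖ * x ^ n * 1 := by gcongr; exact sum_Icc_one_half_pow_lt_one n
  linarith

end NormedDivisionRing

/-- Fujiwara's bound: every root α of p(w) = Σ_{k=0}^n a_k w^{n-k} with a_0 ≠ 0
satisfies |α| ≤ 2 · max_{1 ≤ k ≤ n} |a_k/a_0|^{1/k}. -/
theorem fujiwara_bound (n : ℕ) (hn : 1 ≤ n) (a : ℕ → ℂ) (ha : a 0 ≠ 0) (α : ℂ)
    (hroot : ∑ k ∈ Finset.range (n + 1), a k * α ^ (n - k) = 0) :
    ‖α‖ ≤
      2 * (Finset.Icc 1 n).sup' (Finset.nonempty_Icc.mpr hn)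
        (fun k => ‖a k / a 0‖ ^ ((1 : ℝ) / k)) := by
  set M := (Icc 1 n).sup' (nonempty_Icc.mpr hn) fun k => ‖a k / a 0‖ ^ ((1 : ℝ) / k)
  have hM : 0 ≤ M := le_sup'_of_le _ (mem_Icc.mpr ⟨le_rfl, hn⟩) (by positivity)
  refine norm_le_two_mul_of_sum_eq_zero hroot ha hM fun k hk => ?_
  have hk0 : k ≠ 0 := by have := (mem_Icc.mp hk).1; omega
  have hkth : ‖a k / a 0‖ ^ ((1 : ℝ) / k) ≤ M :=
    le_sup' (fun k => ‖a k / a 0‖ ^ ((1 : ℝ) / k)) hk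
  have := pow_le_pow_left₀ (by positivity) hkth k
  rw [one_div, Real.rpow_inv_natCast_pow (norm_nonneg _) hk0, norm_div,
    div_le_iff₀ (norm_pos_iff.mpr ha)] at this
  linarith
end

section
/- Let g be holomorphic on an open set U ⊆ ℂ containing the closed disk D(z_0, ρ) with ρ > 0, and write g(z) = g(z_0) + (z − z_0) g′(z_0) + (z − z_0)² R(z) for z ≠ z_0 in the open disk. If M̃ = max{ |g(z)| : |z − z_0| = ρ }, then |R(z)| ≤ M̃ / (ρ (ρ − |z − z_0|)) for all z with |z − z_0| < ρ. -/
open Metric Topology NNReal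

/-!
Cauchy's estimates on the circle of radius `ρ` bound the `n`-th Taylor coefficient of `g` at `z₀`
by `M / ρ ^ n`. For `s = ‖z - z₀‖ < ρ` the Taylor tail from degree two on is therefore dominated by
a geometric series with sum `M (s / ρ) ^ 2 / (1 - s / ρ) = M s ^ 2 / (ρ (ρ - s))`; dividing by `s ^ 2`
gives the bound for `z ≠ z₀`, and continuity of `R` carries it to `z₀`.
-/

theorem norm_cauchyPowerSeries_le_of_forall_mem_sphere_norm_le {E : Type*} [NormedAddCommGroup E]
    [NormedSpace ℂ E] {f : ℂ → E} {c : ℂ} {R C : ℝ} (hR : 0 < R)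
    (hC : ∀ z ∈ sphere c R, ‖f z‖ ≤ C) (n : ℕ) :
    ‖cauchyPowerSeries f c R n‖ ≤ C / R ^ n := by
  have hintegrand : ∀ z ∈ sphere c R, ‖(z - c)⁻¹ ^ n • (z - c)⁻¹ • f z‖ ≤ C / R ^ (n + 1) := by
    intro z hz
    calc ‖(z - c)⁻¹ ^ n • (z - c)⁻¹ • f z‖ = ‖f z‖ / R ^ (n + 1) := by
          simp only [norm_smul, norm_pow, norm_inv, mem_sphere_iff_norm.1 hz]
          ring
      _ ≤ C / R ^ (n + 1) := by gcongr; exact hC z hz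
  calc ‖cauchyPowerSeries f c R n‖
      ≤ R * (C / R ^ (n + 1)) := by
        rw [cauchyPowerSeries, ContinuousMultilinearMap.norm_mkPiRing]
        exact circleIntegral.norm_two_pi_i_inv_smul_integral_le_of_norm_le_const hR.le hintegrand
    _ = C / R ^ n := by field_simp; ring

theorem HasFPowerSeriesOnBall.norm_sub_partialSum_le {𝕜 E F : Type*} [NontriviallyNormedField 𝕜]
    [NormedAddCommGroup E] [NormedSpace 𝕜 E] [NormedAddCommGroup F] [NormedSpace 𝕜 F]
    {f : E → F} {p : FormalMultilinearSeries 𝕜 E F} {x : E} {r : ℝ≥0}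
    (hf : HasFPowerSeriesOnBall f p x r) {M : ℝ} (hp : ∀ n, ‖p n‖ ≤ M / r ^ n) {y : E}
    (hy : ‖y‖ < r) (n : ℕ) :
    ‖f (x + y) - p.partialSum n y‖ ≤ M * (‖y‖ / r) ^ n / (1 - ‖y‖ / r) := by
  have hr : (0 : ℝ) < r := (norm_nonneg y).trans_lt hy
  have hyr : ‖y‖ / r < 1 := (div_lt_one hr).2 hy
  have htail : HasSum (fun k => p (k + n) fun _ => y) (f (x + y) - p.partialSum n y) :=
    (hasSum_nat_add_iff' n).2 (hf.hasSum (by simpa [eball_coe] using hy))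
  have hgeom : HasSum (fun k => M * (‖y‖ / r) ^ n * (‖y‖ / r) ^ k)
      (M * (‖y‖ / r) ^ n * (1 - ‖y‖ / r)⁻¹) :=
    (hasSum_geometric_of_lt_one (by positivity) hyr).mul_left _
  refine htail.norm_le_of_bounded hgeom fun k => ?_
  calc ‖p (k + n) fun _ => y‖ ≤ M / r ^ (k + n) * ∏ _ : Fin (k + n), ‖y‖ :=
        (p (k + n)).le_of_opNorm_le (hp _) _
    _ = M * (‖y‖ / r) ^ n * (‖y‖ / r) ^ k := by
        rw [Fin.prod_const, div_pow, div_pow, pow_add]; field_simp; ring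

theorem HasFPowerSeriesAt.partialSum_two {𝕜 F : Type*} [NontriviallyNormedField 𝕜]
    [NormedAddCommGroup F] [NormedSpace 𝕜 F] {f : 𝕜 → F} {p : FormalMultilinearSeries 𝕜 𝕜 F}
    {x : 𝕜} (hf : HasFPowerSeriesAt f p x) (y : 𝕜) :
    p.partialSum 2 y = f x + y • deriv f x := by
  rw [FormalMultilinearSeries.partialSum, Finset.sum_range_succ, Finset.sum_range_one,
    hf.coeff_zero, FormalMultilinearSeries.apply_eq_pow_smul_coeff, pow_one, hf.deriv]
  rfl

theorem le_of_eventually_nhdsNE_le {X α : Type*} [TopologicalSpace X] [TopologicalSpace α]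
    [Preorder α] [OrderClosedTopology α] {a : X} [(𝓝[≠] a).NeBot] {f g : X → α}
    (hf : ContinuousAt f a) (hg : ContinuousAt g a) (h : ∀ᶠ x in 𝓝[≠] a, f x ≤ g x) :
    f a ≤ g a :=
  le_of_tendsto_of_tendsto (hf.tendsto.mono_left nhdsWithin_le_nhds)
    (hg.tendsto.mono_left nhdsWithin_le_nhds) h

theorem Complex.norm_sub_taylor_one_le {E : Type*} [NormedAddCommGroup E]
    [NormedSpace ℂ E] [CompleteSpace E] {g : ℂ → E} {c w : ℂ} {ρ : ℝ≥0} {M : ℝ}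
    (hg : DifferentiableOn ℂ g (closedBall c ρ)) (hρ : 0 < ρ)
    (hM : ∀ z ∈ sphere c ρ, ‖g z‖ ≤ M) (hw : ‖w - c‖ < ρ) :
    ‖g w - (g c + (w - c) • deriv g c)‖ ≤ M * ‖w - c‖ ^ 2 / (ρ * (ρ - ‖w - c‖)) := by
  have hps := hg.hasFPowerSeriesOnBall hρ
  have hbound := hps.norm_sub_partialSum_le
    (norm_cauchyPowerSeries_le_of_forall_mem_sphere_norm_le (NNReal.coe_pos.2 hρ) hM) hw 2
  rw [hps.hasFPowerSeriesAt.partialSum_two, add_sub_cancel] at hbound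
  have hρ' : (ρ : ℝ) - ‖w - c‖ ≠ 0 := (sub_pos.2 hw).ne'
  convert hbound using 1
  field_simp

theorem taylor_remainder_bound_general (U : Set ℂ) (g : ℂ → ℂ)
    (hg : DifferentiableOn ℂ g U) (z₀ : ℂ) (ρ : ℝ) (hρ : 0 < ρ)
    (hball : Metric.closedBall z₀ ρ ⊆ U)
    (R : ℂ → ℂ)
    (hRc : ContinuousOn R (Metric.ball z₀ ρ))
    (hR : ∀ z ∈ Metric.ball z₀ ρ, z ≠ z₀ →
      g z = g z₀ + (z - z₀) * deriv g z₀ + (z - z₀) ^ 2 * R z)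
    (M : ℝ)
    (hM : IsGreatest {x : ℝ | ∃ z : ℂ, ‖z - z₀‖ = ρ ∧ x = ‖g z‖} M) :
    ∀ z : ℂ, ‖z - z₀‖ < ρ →
      ‖R z‖ ≤ M / (ρ * (ρ - ‖z - z₀‖)) := by
  lift ρ to ℝ≥0 using hρ.le
  have hsphere : ∀ w ∈ sphere z₀ ρ, ‖g w‖ ≤ M := fun w hw =>
    hM.2 ⟨w, mem_sphere_iff_norm.1 hw, rfl⟩
  have hpunctured : ∀ w ∈ ball z₀ ρ, w ≠ z₀ → ‖R w‖ ≤ M / (ρ * (ρ - ‖w - z₀‖)) := by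
    intro w hw hne
    have hw' := mem_ball_iff_norm.1 hw
    have hs : 0 < ‖w - z₀‖ ^ 2 := pow_pos (norm_pos_iff.2 (sub_ne_zero.2 hne)) 2
    refine le_of_mul_le_mul_left ?_ hs
    calc ‖w - z₀‖ ^ 2 * ‖R w‖ = ‖g w - (g z₀ + (w - z₀) • deriv g z₀)‖ := by
          rw [hR w hw hne, smul_eq_mul, add_sub_cancel_left, norm_mul, norm_pow]
      _ ≤ M * ‖w - z₀‖ ^ 2 / (ρ * (ρ - ‖w - z₀‖)) :=
          Complex.norm_sub_taylor_one_le (hg.mono hball) (NNReal.coe_pos.1 hρ) hsphere hw'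
      _ = ‖w - z₀‖ ^ 2 * (M / (ρ * (ρ - ‖w - z₀‖))) := by ring
  intro z hz
  rcases eq_or_ne z z₀ with rfl | hne
  · have hnhds : ball z ρ ∈ 𝓝 z := ball_mem_nhds z hρ
    have hbound_cont : ContinuousAt (fun w => M / (ρ * (ρ - ‖w - z‖))) z :=
      continuousAt_const.div (by fun_prop) (by simpa using hρ.ne')
    refine le_of_eventually_nhdsNE_le (hRc.continuousAt hnhds).norm hbound_cont ?_
    filter_upwards [self_mem_nhdsWithin, mem_nhdsWithin_of_mem_nhds hnhds] with w hne hw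
    exact hpunctured w hw hne
  · exact hpunctured z (mem_ball_iff_norm.2 hz) hne

/-- Cauchy-form bound on the first-order Taylor remainder of a holomorphic function:
R is the remainder of the first-order Taylor expansion of g at z₀ (extended
continuously/holomorphically at z₀) and M is the maximum of |g| on the circle of
radius ρ; then |R(z)| ≤ M/(ρ(ρ − |z − z₀|)) on the open disk. -/
theorem taylor_remainder_bound (U : Set ℂ) (hU : IsOpen U) (g : ℂ → ℂ)
    (hg : DifferentiableOn ℂ g U) (z₀ : ℂ) (ρ : ℝ) (hρ : 0 < ρ)
    (hball : Metric.closedBall z₀ ρ ⊆ U)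
    (R : ℂ → ℂ)
    (hRc : ContinuousOn R (Metric.ball z₀ ρ))
    (hR : ∀ z ∈ Metric.ball z₀ ρ, z ≠ z₀ →
      g z = g z₀ + (z - z₀) * deriv g z₀ + (z - z₀) ^ 2 * R z)
    (M : ℝ)
    (hM : IsGreatest {x : ℝ | ∃ z : ℂ, ‖z - z₀‖ = ρ ∧ x = ‖g z‖} M) :
    ∀ z : ℂ, ‖z - z₀‖ < ρ →
      ‖R z‖ ≤ M / (ρ * (ρ - ‖z - z₀‖)) :=
  taylor_remainder_bound_general U g hg z₀ ρ hρ hball R hRc hR M hM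
end
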